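/- The neighborhood N = {(0,1), (1,0), (−1,0), (1,1), (1,−1), (−1,−1)} (neighborhood 215 in the 8-bit numbering of subsets of the Moore neighborhood) admits a timed crossover gate of size 12 × 12 and delay 17. -/

import Mathlib

/-! Sandpile models on ℤ² and timed crossover gates. -/

abbrev Cell : Type := ℤ × ℤ
abbrev Config : Type := Cell → ℕ

namespace Sandpile

/-- The threshold of a sandpile model is the cardinality of its neighborhood. -/
def θ (𝒩 : Finset Cell) : ℕ := 𝒩.card

/-- The parallel sandpile dynamics: each cell reaching the threshold topples,
sending one grain to each of its out-neighbors. -/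
def F (𝒩 : Finset Cell) (c : Config) : Config := fun p =>
  c p - θ 𝒩 * (if θ 𝒩 ≤ c p then 1 else 0)
    + ∑ p' ∈ 𝒩, (if θ 𝒩 ≤ c (p - p') then 1 else 0)

/-- The configuration with a single grain at cell `p`. -/
def one (p : Cell) : Config := fun q => if q = p then 1 else 0

/-- A configuration is stable when every cell is below the threshold. -/
def Stable (𝒩 : Finset Cell) (c : Config) : Prop := ∀ p, c p < θ 𝒩

/-- The rectangle {0,…,M−1} × {0,…,N'−1}. -/
def Rect (M N' : ℕ) : Set Cell :=
  {p | 0 ≤ p.1 ∧ p.1 < (M : ℤ) ∧ 0 ≤ p.2 ∧ p.2 < (N' : ℤ)}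

/-- The four corners of the rectangle. -/
def Corners (M N' : ℕ) : Set Cell :=
  {(0, 0), ((M : ℤ) - 1, 0), (0, (N' : ℤ) - 1), ((M : ℤ) - 1, (N' : ℤ) - 1)}

/-- The four sides of the rectangle. -/
def side (M N' : ℕ) (i : Fin 4) : Set Cell :=
  if i = 0 then {p | p.1 = 0 ∧ 0 ≤ p.2 ∧ p.2 < (N' : ℤ)}
  else if i = 1 then {p | p.2 = 0 ∧ 0 ≤ p.1 ∧ p.1 < (M : ℤ)}
  else if i = 2 then {p | p.1 = (M : ℤ) - 1 ∧ 0 ≤ p.2 ∧ p.2 < (N' : ℤ)}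
  else {p | p.2 = (N' : ℤ) - 1 ∧ 0 ≤ p.1 ∧ p.1 < (M : ℤ)}

/-- A timed crossover gate of size M × N' and delay T for the sandpile model 𝒩:
a stable configuration `g` supported on the rectangle, together with four
non-corner cells `n`, `e`, `s`, `w` on four pairwise different sides, `n, s`
(resp. `w, e`) on opposite sides, such that adding a grain at `n` (resp. `w`)
makes `s` (resp. `e`) reach the threshold at time exactly `T`, while no cell
on the two other sides reaches the threshold at any time `t ≤ T`. -/
def IsTimedCrossoverGate (𝒩 : Finset Cell) (M N' T : ℕ)
    (g : Config) (n e s w : Cell) : Prop :=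
  Stable 𝒩 g ∧
  (∀ p, p ∉ Rect M N' → g p = 0) ∧
  n ∈ Rect M N' ∧ e ∈ Rect M N' ∧ s ∈ Rect M N' ∧ w ∈ Rect M N' ∧
  n ∉ Corners M N' ∧ e ∉ Corners M N' ∧ s ∉ Corners M N' ∧ w ∉ Corners M N' ∧
  ∃ iN iE iS iW : Fin 4,
    n ∈ side M N' iN ∧ e ∈ side M N' iE ∧ s ∈ side M N' iS ∧ w ∈ side M N' iW ∧
    ((iN : ℤ) - (iS : ℤ)).natAbs = 2 ∧
    ((iW : ℤ) - (iE : ℤ)).natAbs = 2 ∧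
    ({iN, iE, iS, iW} : Finset (Fin 4)) = Finset.univ ∧
    θ 𝒩 ≤ (F 𝒩)^[T] (g + one n) s ∧
    (∀ p ∈ side M N' iW ∪ side M N' iE, ∀ t ≤ T, (F 𝒩)^[t] (g + one n) p < θ 𝒩) ∧
    θ 𝒩 ≤ (F 𝒩)^[T] (g + one w) e ∧
    (∀ p ∈ side M N' iN ∪ side M N' iS, ∀ t ≤ T, (F 𝒩)^[t] (g + one w) p < θ 𝒩)

/-! The gate is given explicitly and both runs are verified by computation. If no cell outside
the interior of a window topples, `F` maps a configuration supported on the window to one supported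
on the same window, computable from a finite table. Checking along each run that the one-cell margin
around the rectangle stays below the threshold thus reduces the 17 steps of the dynamics on ℤ² to
a simulation on a 14 × 14 table, which the kernel evaluates. -/

instance (M N' : ℕ) : DecidablePred (· ∈ Rect M N') := fun p =>
  inferInstanceAs (Decidable (0 ≤ p.1 ∧ p.1 < (M : ℤ) ∧ 0 ≤ p.2 ∧ p.2 < (N' : ℤ)))

abbrev Table : Type := List (List ℕ)

namespace Table

def entry (A : Table) (i j : ℕ) : ℕ := (A.getD j []).getD i 0

/-- Row `j`, column `i` of `A` is the cell `o + (i, j)`. -/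
def toConfig (o : Cell) (w h : ℕ) (A : Table) : Config := fun p =>
  if p - o ∈ Rect w h then A.entry (p - o).1.toNat (p - o).2.toNat else 0

def tabulate (w h : ℕ) (f : ℕ → ℕ → ℕ) : Table :=
  (List.range h).map fun j => (List.range w).map fun i => f i j

def step (𝒩 : Finset Cell) (o : Cell) (w h : ℕ) (A : Table) : Table :=
  tabulate w h fun i j => F 𝒩 (A.toConfig o w h) (o.1 + i, o.2 + j)

def Interior (o : Cell) (w h : ℕ) (p : Cell) : Prop :=
  o.1 < p.1 ∧ p.1 + 1 < o.1 + w ∧ o.2 < p.2 ∧ p.2 + 1 < o.2 + h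

instance (o : Cell) (w h : ℕ) : DecidablePred (Interior o w h) := fun _ =>
  inferInstanceAs (Decidable (_ ∧ _))

def BelowOn (P : Cell → Prop) (θ : ℕ) (o : Cell) (w h : ℕ) (A : Table) : Prop :=
  ∀ i < w, ∀ j < h, P (o.1 + i, o.2 + j) → A.entry i j < θ

instance (P : Cell → Prop) [DecidablePred P] (θ : ℕ) (o : Cell) (w h : ℕ) (A : Table) :
    Decidable (BelowOn P θ o w h A) :=
  inferInstanceAs (Decidable (∀ i < w, ∀ j < h, _))

variable {o : Cell} {w h : ℕ}

theorem BelowOn.mono {P P' : Cell → Prop} {θ : ℕ} {A : Table} (hA : BelowOn P' θ o w h A)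
    (hP : ∀ p, P p → P' p) : BelowOn P θ o w h A :=
  fun i hi j hj hp => hA i hi j hj (hP _ hp)

theorem toConfig_of_not_mem {A : Table} {p : Cell} (hp : p - o ∉ Rect w h) :
    A.toConfig o w h p = 0 :=
  if_neg hp

theorem entry_tabulate {f : ℕ → ℕ → ℕ} {i j : ℕ} (hi : i < w) (hj : j < h) :
    (tabulate w h f).entry i j = f i j := by
  simp [entry, tabulate, List.getD_eq_getElem?_getD, hi, hj]

theorem toConfig_tabulate {c : Config} (hc : ∀ p, p - o ∉ Rect w h → c p = 0) :
    (tabulate w h fun i j => c (o.1 + i, o.2 + j)).toConfig o w h = c := by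
  funext p
  by_cases hp : p - o ∈ Rect w h
  · obtain ⟨h1, h2, h3, h4⟩ := hp
    rw [toConfig, if_pos ⟨h1, h2, h3, h4⟩]
    simp only [Prod.fst_sub, Prod.snd_sub] at h1 h2 h3 h4 ⊢
    rw [entry_tabulate (by omega) (by omega)]
    congr 1
    ext <;> omega
  · rw [toConfig_of_not_mem hp, hc p hp]

theorem BelowOn.toConfig_lt {P : Cell → Prop} {θ : ℕ} {A : Table} (hA : BelowOn P θ o w h A)
    (hθ : 0 < θ) {p : Cell} (hp : P p) : A.toConfig o w h p < θ := by
  unfold toConfig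
  split_ifs with hw
  · obtain ⟨h1, h2, h3, h4⟩ := hw
    simp only [Prod.fst_sub, Prod.snd_sub] at h1 h2 h3 h4 ⊢
    refine hA _ (by omega) _ (by omega) ?_
    convert hp using 1
    ext <;> omega
  · exact hθ

theorem F_toConfig {𝒩 : Finset Cell} (h𝒩 : ∀ d ∈ 𝒩, |d.1| ≤ 1 ∧ |d.2| ≤ 1) {A : Table}
    (hA : ∀ p, ¬ Interior o w h p → A.toConfig o w h p < θ 𝒩) :
    F 𝒩 (A.toConfig o w h) = (A.step 𝒩 o w h).toConfig o w h := by
  refine (toConfig_tabulate fun p hp => ?_).symm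
  have quiet : ∀ d ∈ 𝒩, ¬ θ 𝒩 ≤ A.toConfig o w h (p - d) := by
    intro d hd
    refine not_le.2 (hA _ fun ⟨h1, h2, h3, h4⟩ => hp ?_)
    obtain ⟨hd1, hd2⟩ := h𝒩 d hd
    rw [abs_le] at hd1 hd2
    simp only [Rect, Set.mem_ofPred_eq, Prod.fst_sub, Prod.snd_sub] at h1 h2 h3 h4 ⊢
    omega
  simp only [F, toConfig_of_not_mem hp, Finset.sum_eq_zero fun d hd => if_neg (quiet d hd),
    zero_tsub, add_zero]

theorem iterate_F_toConfig {𝒩 : Finset Cell} (h𝒩 : ∀ d ∈ 𝒩, |d.1| ≤ 1 ∧ |d.2| ≤ 1)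
    {A : Table} {k : ℕ}
    (hA : ∀ t < k, ∀ p, ¬ Interior o w h p → ((step 𝒩 o w h)^[t] A).toConfig o w h p < θ 𝒩) :
    (F 𝒩)^[k] (A.toConfig o w h) = ((step 𝒩 o w h)^[k] A).toConfig o w h := by
  induction k with
  | zero => rfl
  | succ k ih =>
    rw [Function.iterate_succ_apply', ih fun t ht => hA t (by omega),
      F_toConfig h𝒩 (hA k (by omega)), Function.iterate_succ_apply']

end Table

theorem fst_eq_of_mem_side_zero_union_two {M N' : ℕ} {p : Cell}
    (hp : p ∈ side M N' 0 ∪ side M N' 2) : p.1 = 0 ∨ p.1 = M - 1 := by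
  rcases hp with ⟨h, -⟩ | ⟨h, -⟩ <;> simp_all

theorem snd_eq_of_mem_side_three_union_one {M N' : ℕ} {p : Cell}
    (hp : p ∈ side M N' 3 ∪ side M N' 1) : p.2 = 0 ∨ p.2 = N' - 1 := by
  rcases hp with ⟨h, -⟩ | ⟨h, -⟩ <;> simp_all

local notation "N₂₁₅" => ({(0,1),(1,0),(-1,0),(1,1),(1,-1),(-1,-1)} : Finset Cell)

/-- Row `j` is the line `y = j`: the gate drawn upside down. -/
def gateTable : Table :=
  [[0, 0, 0, 0, 0, 5, 0, 0, 0, 0, 0, 0],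
   [0, 0, 0, 0, 5, 0, 0, 0, 0, 0, 0, 0],
   [0, 0, 0, 5, 0, 0, 0, 0, 0, 0, 0, 0],
   [0, 0, 5, 0, 0, 0, 0, 0, 0, 0, 0, 0],
   [0, 5, 5, 5, 5, 5, 5, 5, 0, 0, 0, 0],
   [0, 0, 0, 0, 3, 3, 0, 5, 5, 3, 4, 0],
   [0, 5, 4, 4, 5, 4, 3, 5, 0, 4, 5, 4],
   [5, 5, 3, 3, 2, 3, 3, 2, 5, 5, 0, 3],
   [0, 5, 4, 4, 4, 1, 5, 4, 0, 2, 5, 4],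
   [0, 0, 0, 0, 4, 3, 5, 5, 2, 1, 3, 0],
   [0, 0, 0, 5, 0, 5, 0, 0, 0, 0, 0, 0],
   [0, 0, 0, 0, 5, 0, 0, 0, 0, 0, 0, 0]]

def gate : Config := gateTable.toConfig 0 12 12

/-- The run from `gate + one q`, on the rectangle enlarged by one cell on each side. -/
def run (q : Cell) (t : ℕ) : Table :=
  (Table.step N₂₁₅ (-1, -1) 14 14)^[t]
    (Table.tabulate 14 14 fun i j => (gate + one q) (-1 + i, -1 + j))

theorem stable_gate : Stable N₂₁₅ gate := fun _ =>
  (by decide : gateTable.BelowOn (fun _ => True) 6 0 12 12).toConfig_lt (by norm_num) trivial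

theorem gate_add_one_eq {q : Cell} (hq : q ∈ Rect 12 12) :
    gate + one q = (run q 0).toConfig (-1, -1) 14 14 := by
  refine (Table.toConfig_tabulate fun p hp => ?_).symm
  simp only [Rect, Set.mem_ofPred_eq, Prod.fst_sub, Prod.snd_sub] at hp hq
  have hg : p - 0 ∉ Rect 12 12 := by simp only [Rect, Set.mem_ofPred_eq, sub_zero]; omega
  have hpq : p ≠ q := by rintro rfl; omega
  simp [gate, Table.toConfig_of_not_mem hg, one, hpq]

theorem iterate_F_gate_add_one {q : Cell} (hq : q ∈ Rect 12 12) {k : ℕ}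
    (hrun : ∀ t < k, (run q t).BelowOn (¬ Table.Interior (-1, -1) 14 14 ·) 6 (-1, -1) 14 14) :
    ∀ t ≤ k, (F N₂₁₅)^[t] (gate + one q) = (run q t).toConfig (-1, -1) 14 14 := by
  intro t ht
  rw [gate_add_one_eq hq, Table.iterate_F_toConfig (by decide)]
  · rfl
  · exact fun s hs p hp => (hrun s (by omega)).toConfig_lt (by norm_num) hp

theorem nbhd215_timed_crossover :
    ∃ g n e s w, IsTimedCrossoverGate
      ({(0,1),(1,0),(-1,0),(1,1),(1,-1),(-1,-1)} : Finset Cell) 12 12 17 g n e s w := by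
  have hθ : θ N₂₁₅ = 6 := rfl
  obtain ⟨quietN, reachN⟩ : (∀ t ≤ 17, (run (4, 11) t).BelowOn
      (fun p => ¬ Table.Interior (-1, -1) 14 14 p ∨ p.1 = 0 ∨ p.1 = 11) 6 (-1, -1) 14 14) ∧
      6 ≤ (run (4, 11) 17).toConfig (-1, -1) 14 14 (5, 0) := by
    decide +kernel
  obtain ⟨quietW, reachW⟩ : (∀ t ≤ 17, (run (0, 7) t).BelowOn
      (fun p => ¬ Table.Interior (-1, -1) 14 14 p ∨ p.2 = 0 ∨ p.2 = 11) 6 (-1, -1) 14 14) ∧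
      6 ≤ (run (0, 7) 17).toConfig (-1, -1) 14 14 (11, 7) := by
    decide +kernel
  have runN := iterate_F_gate_add_one (q := (4, 11)) (by decide)
    fun t ht => (quietN t ht.le).mono fun _ => Or.inl
  have runW := iterate_F_gate_add_one (q := (0, 7)) (by decide)
    fun t ht => (quietW t ht.le).mono fun _ => Or.inl
  refine ⟨gate, (4, 11), (11, 7), (5, 0), (0, 7), stable_gate,
    fun p hp => Table.toConfig_of_not_mem (by simpa using hp),
    by decide, by decide, by decide, by decide,
    by simp [Corners], by simp [Corners], by simp [Corners], by simp [Corners],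
    3, 2, 1, 0, by simp [side], by simp [side], by simp [side], by simp [side],
    by decide, by decide, by decide, ?_, fun p hp t ht => ?_, ?_, fun p hp t ht => ?_⟩
  · rw [runN 17 le_rfl, hθ]
    exact reachN
  · have hp' : p.1 = 0 ∨ p.1 = 11 := by simpa using fst_eq_of_mem_side_zero_union_two hp
    rw [runN t ht, hθ]
    exact (quietN t ht).toConfig_lt (by norm_num) (Or.inr hp')
  · rw [runW 17 le_rfl, hθ]
    exact reachW
  · have hp' : p.2 = 0 ∨ p.2 = 11 := by simpa using snd_eq_of_mem_side_three_union_one hp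
    rw [runW t ht, hθ]
    exact (quietW t ht).toConfig_lt (by norm_num) (Or.inr hp')

end Sandpile
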